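/- Fix an initial state x ∈ ℝ^n, an input bound ε₀ ≥ 0, and a horizon N. Then the resilience metric under the linear closed-loop controller satisfies: sup{ μ ≥ 0 : there exist α₁ ∈ ℝ^{m×n}, α₂ ∈ ℝ^m such that for every disturbance sequence d(0), …, d(N−1) with ‖d(i)‖∞ ≤ μ, the closed-loop trajectory x(0) = x, x(k+1) = A_k x(k) + B_k (α₁ x(k) + α₂) + d(k) satisfies G_k x(k) ≤ H_k for all k = 0, …, N and ‖α₁ x(k) + α₂‖∞ ≤ ε₀ for all k = 0, …, N−1 } = sup{ μ ≥ 0 : there exist α₁ ∈ ℝ^{m×n}, α₂ ∈ ℝ^m and a nonnegative matrix P ∈ ℝ^{((N+1)q + 2mN) × 2n(N+1)} with P A_b = μ E^{cl}(α₁) and P B_b ≤ F^{cl}(x, α₁, α₂, ε₀) }. -/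

import Mathlib

/-!
Unrolling the closed loop gives `x(k) = F_k + E_k v`, where `v` stacks the disturbances
`d(0), …, d(N-1)`; so for a fixed gain `(α₁, α₂)` the specification holds for every disturbance
bounded by `μ` exactly when `E^{cl} v ≤ F^{cl}` on the box `‖v‖∞ ≤ μ`. The maximum of a linear
form `w` over that box is `μ ‖w‖₁`, and the row inequality `μ ‖E_i‖₁ ≤ F_i` is precisely what a
nonnegative certificate `P` with `P A_b = μ E`, `P B_b ≤ F` expresses: `P_i = ((μ E_i)⁺, (μ E_i)⁻)`
is one, and any such `P_i` has `P_i B_b ≥ ‖μ E_i‖₁`. Hence both sets of admissible `μ` coincide.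
-/

open Matrix Finset

noncomputable section

/-- Ordered product `M (k-1) * M (k-2) * ⋯ * M i` (empty product = identity when `k ≤ i`). -/
def mprod {n : ℕ} (M : ℕ → Matrix (Fin n) (Fin n) ℝ) (i k : ℕ) :
    Matrix (Fin n) (Fin n) ℝ :=
  (((List.range' i (k - i)).reverse).map M).prod

def Abar {n m : ℕ} (A : ℕ → Matrix (Fin n) (Fin n) ℝ) (B : ℕ → Matrix (Fin n) (Fin m) ℝ)
    (α₁ : Matrix (Fin m) (Fin n) ℝ) (j : ℕ) : Matrix (Fin n) (Fin n) ℝ :=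
  A j + B j * α₁

def trajCL {n m : ℕ} (A : ℕ → Matrix (Fin n) (Fin n) ℝ) (B : ℕ → Matrix (Fin n) (Fin m) ℝ)
    (α₁ : Matrix (Fin m) (Fin n) ℝ) (α₂ : Fin m → ℝ) (d : ℕ → Fin n → ℝ)
    (x0 : Fin n → ℝ) : ℕ → Fin n → ℝ
  | 0 => x0
  | k + 1 =>
      (A k).mulVec (trajCL A B α₁ α₂ d x0 k)
        + (B k).mulVec (α₁.mulVec (trajCL A B α₁ α₂ d x0 k) + α₂) + d k

def Eblk {n : ℕ} (N : ℕ) (M : ℕ → Matrix (Fin n) (Fin n) ℝ) (k : ℕ) :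
    Matrix (Fin n) (Fin (N + 1) × Fin n) ℝ :=
  Matrix.of fun r jc =>
    if 1 ≤ (jc.1 : ℕ) ∧ (jc.1 : ℕ) ≤ k then mprod M (jc.1 : ℕ) k r jc.2 else 0

def Fblk {n m : ℕ} (A : ℕ → Matrix (Fin n) (Fin n) ℝ) (B : ℕ → Matrix (Fin n) (Fin m) ℝ)
    (α₁ : Matrix (Fin m) (Fin n) ℝ) (α₂ : Fin m → ℝ) (x : Fin n → ℝ) (k : ℕ) : Fin n → ℝ :=
  (mprod (Abar A B α₁) 0 k).mulVec x
    + ∑ i ∈ Finset.range k, (mprod (Abar A B α₁) (i + 1) k * B i).mulVec α₂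

def Ex {n m q : ℕ} (N : ℕ) (A : ℕ → Matrix (Fin n) (Fin n) ℝ)
    (B : ℕ → Matrix (Fin n) (Fin m) ℝ) (G : ℕ → Matrix (Fin q) (Fin n) ℝ)
    (α₁ : Matrix (Fin m) (Fin n) ℝ) :
    Matrix (Fin (N + 1) × Fin q) (Fin (N + 1) × Fin n) ℝ :=
  Matrix.of fun kr jc => (G (kr.1 : ℕ) * Eblk N (Abar A B α₁) (kr.1 : ℕ)) kr.2 jc

def Fx {n m q : ℕ} (N : ℕ) (A : ℕ → Matrix (Fin n) (Fin n) ℝ)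
    (B : ℕ → Matrix (Fin n) (Fin m) ℝ) (G : ℕ → Matrix (Fin q) (Fin n) ℝ)
    (H : ℕ → Fin q → ℝ) (α₁ : Matrix (Fin m) (Fin n) ℝ) (α₂ : Fin m → ℝ)
    (x : Fin n → ℝ) : Fin (N + 1) × Fin q → ℝ :=
  fun kr => H (kr.1 : ℕ) kr.2 - (G (kr.1 : ℕ)).mulVec (Fblk A B α₁ α₂ x (kr.1 : ℕ)) kr.2

def Au (m : ℕ) : Matrix (Fin m ⊕ Fin m) (Fin m) ℝ := Matrix.fromRows 1 (-1)

def Sk {n m : ℕ} (A : ℕ → Matrix (Fin n) (Fin n) ℝ) (B : ℕ → Matrix (Fin n) (Fin m) ℝ)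
    (α₁ : Matrix (Fin m) (Fin n) ℝ) (α₂ : Fin m → ℝ) (x : Fin n → ℝ) (k : ℕ) : Fin m → ℝ :=
  α₁.mulVec (Fblk A B α₁ α₂ x k) + α₂

def Ecl {n m q : ℕ} (N : ℕ) (A : ℕ → Matrix (Fin n) (Fin n) ℝ)
    (B : ℕ → Matrix (Fin n) (Fin m) ℝ) (G : ℕ → Matrix (Fin q) (Fin n) ℝ)
    (α₁ : Matrix (Fin m) (Fin n) ℝ) :
    Matrix ((Fin (N + 1) × Fin q) ⊕ (Fin N × (Fin m ⊕ Fin m))) (Fin (N + 1) × Fin n) ℝ :=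
  Matrix.fromRows (Ex N A B G α₁)
    (Matrix.of fun kr jc => (Au m * α₁ * Eblk N (Abar A B α₁) (kr.1 : ℕ)) kr.2 jc)

def Fcl {n m q : ℕ} (N : ℕ) (A : ℕ → Matrix (Fin n) (Fin n) ℝ)
    (B : ℕ → Matrix (Fin n) (Fin m) ℝ) (G : ℕ → Matrix (Fin q) (Fin n) ℝ)
    (H : ℕ → Fin q → ℝ) (α₁ : Matrix (Fin m) (Fin n) ℝ) (α₂ : Fin m → ℝ)
    (x : Fin n → ℝ) (ε : ℝ) : (Fin (N + 1) × Fin q) ⊕ (Fin N × (Fin m ⊕ Fin m)) → ℝ :=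
  Sum.elim (Fx N A B G H α₁ α₂ x)
    (fun kr => ε - (Au m).mulVec (Sk A B α₁ α₂ x (kr.1 : ℕ)) kr.2)

def AbM (N n : ℕ) :
    Matrix ((Fin (N + 1) × Fin n) ⊕ (Fin (N + 1) × Fin n)) (Fin (N + 1) × Fin n) ℝ :=
  Matrix.fromRows 1 (-1)

def BbV (N n : ℕ) : (Fin (N + 1) × Fin n) ⊕ (Fin (N + 1) × Fin n) → ℝ := fun _ => 1

def trajOL {n m : ℕ} (A : ℕ → Matrix (Fin n) (Fin n) ℝ) (B : ℕ → Matrix (Fin n) (Fin m) ℝ)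
    (u : ℕ → Fin m → ℝ) (d : ℕ → Fin n → ℝ) (x0 : Fin n → ℝ) : ℕ → Fin n → ℝ
  | 0 => x0
  | k + 1 => (A k).mulVec (trajOL A B u d x0 k) + (B k).mulVec (u k) + d k

def Eol {n q : ℕ} (N : ℕ) (A : ℕ → Matrix (Fin n) (Fin n) ℝ)
    (G : ℕ → Matrix (Fin q) (Fin n) ℝ) :
    Matrix (Fin (N + 1) × Fin q) (Fin (N + 1) × Fin n) ℝ :=
  Matrix.of fun kr jc => (G (kr.1 : ℕ) * Eblk N A (kr.1 : ℕ)) kr.2 jc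

def Fol {n m q : ℕ} (N : ℕ) (A : ℕ → Matrix (Fin n) (Fin n) ℝ)
    (B : ℕ → Matrix (Fin n) (Fin m) ℝ) (G : ℕ → Matrix (Fin q) (Fin n) ℝ)
    (H : ℕ → Fin q → ℝ) (x : Fin n → ℝ) (ut : ℕ → Fin m → ℝ) (ε : ℝ) :
    Fin (N + 1) × Fin q → ℝ :=
  fun kr => H (kr.1 : ℕ) kr.2
    - (G (kr.1 : ℕ)).mulVec ((mprod A 0 (kr.1 : ℕ)).mulVec x) kr.2
    - ε * (G (kr.1 : ℕ)).mulVec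
        (∑ i ∈ Finset.range (kr.1 : ℕ), (mprod A (i + 1) (kr.1 : ℕ) * B i).mulVec (ut i)) kr.2

section BoxDuality

variable {ι κ : Type*} [Fintype ι]

theorem forall_abs_le_dotProduct_le_iff (w : ι → ℝ) (c : ℝ) {μ : ℝ} (hμ : 0 ≤ μ) :
    (∀ v : ι → ℝ, (∀ p, |v p| ≤ μ) → w ⬝ᵥ v ≤ c) ↔ ∑ p, |μ * w p| ≤ c := by
  have habs : ∀ p, |μ * w p| = μ * |w p| := fun p => by rw [abs_mul, abs_of_nonneg hμ]
  simp only [habs]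
  constructor
  · intro h
    -- the maximum of `w ⬝ᵥ ·` over the box is attained at the corner `μ • sign w`
    refine le_trans (le_of_eq ?_) (h (fun p => if 0 ≤ w p then μ else -μ) fun p => ?_)
    · refine Finset.sum_congr rfl fun p _ => ?_
      dsimp only
      split_ifs with hp
      · rw [abs_of_nonneg hp, mul_comm]
      · rw [abs_of_neg (not_le.mp hp)]; ring
    · split_ifs <;> simp [abs_of_nonneg hμ]
  · intro h v hv
    calc w ⬝ᵥ v ≤ ∑ p, |w p| * |v p| :=
          Finset.sum_le_sum fun p _ => (le_abs_self _).trans (abs_mul _ _).le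
      _ ≤ ∑ p, μ * |w p| :=
          Finset.sum_le_sum fun p _ => by
            rw [mul_comm μ]; exact mul_le_mul_of_nonneg_left (hv p) (abs_nonneg _)
      _ ≤ c := h

theorem forall_abs_le_mulVec_le_iff (M : Matrix κ ι ℝ) (f : κ → ℝ) {μ : ℝ} (hμ : 0 ≤ μ) :
    (∀ v : ι → ℝ, (∀ p, |v p| ≤ μ) → M *ᵥ v ≤ f) ↔ ∀ i, ∑ j, |μ * M i j| ≤ f i := by
  simp only [← forall_abs_le_dotProduct_le_iff _ _ hμ]
  exact ⟨fun h i v hv => h v hv i, fun h v hv i => h i v hv⟩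

theorem mul_fromRows_one_neg_one [DecidableEq ι] (P : Matrix κ (ι ⊕ ι) ℝ) :
    P * (fromRows 1 (-1) : Matrix (ι ⊕ ι) ι ℝ) = P.toCols₁ - P.toCols₂ := by
  rw [← fromCols_toCols P, fromCols_mul_fromRows]
  simp [sub_eq_add_neg]

theorem exists_nonneg_mul_fromRows_iff [Fintype κ] [DecidableEq ι] (E : Matrix κ ι ℝ)
    (f : κ → ℝ) :
    (∃ P : Matrix κ (ι ⊕ ι) ℝ, (∀ i j, 0 ≤ P i j) ∧
        P * (fromRows 1 (-1) : Matrix (ι ⊕ ι) ι ℝ) = E ∧ P *ᵥ (fun _ => 1) ≤ f) ↔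
      ∀ i, ∑ j, |E i j| ≤ f i := by
  have hrowSum : ∀ (P : Matrix κ (ι ⊕ ι) ℝ) i,
      (P *ᵥ fun _ => 1) i = ∑ j, (P i (Sum.inl j) + P i (Sum.inr j)) := fun P i => by
    simp [mulVec, dotProduct, Fintype.sum_sum_type, Finset.sum_add_distrib]
  constructor
  · rintro ⟨P, hP, rfl, hPf⟩ i
    refine le_trans (Finset.sum_le_sum fun j _ => ?_) ((hrowSum P i).symm.trans_le (hPf i))
    rw [mul_fromRows_one_neg_one]
    exact (abs_sub _ _).trans_eq (by simp [abs_of_nonneg (hP _ _)])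
  · intro h
    refine ⟨of fun i => Sum.elim (fun j => (E i j)⁺) (fun j => (E i j)⁻), ?_, ?_, fun i => ?_⟩
    · rintro i (j | j) <;> simp [posPart_nonneg, negPart_nonneg]
    · ext i j
      simp [mul_fromRows_one_neg_one, posPart_sub_negPart]
    · simpa [hrowSum, posPart_add_negPart] using h i

end BoxDuality

section ClosedLoop

variable {n m : ℕ}

theorem mprod_of_le (M : ℕ → Matrix (Fin n) (Fin n) ℝ) {i k : ℕ} (h : k ≤ i) :
    mprod M i k = 1 := by
  simp [mprod, Nat.sub_eq_zero_of_le h]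

theorem mprod_succ (M : ℕ → Matrix (Fin n) (Fin n) ℝ) {i k : ℕ} (h : i ≤ k) :
    mprod M i (k + 1) = M k * mprod M i k := by
  rw [mprod, show k + 1 - i = k - i + 1 by omega, List.range'_concat,
    show i + 1 * (k - i) = k by omega]
  simp [mprod]

theorem sum_range_succ_mprod_mulVec (M : ℕ → Matrix (Fin n) (Fin n) ℝ) (d : ℕ → Fin n → ℝ)
    (k : ℕ) :
    ∑ i ∈ range (k + 1), mprod M (i + 1) (k + 1) *ᵥ d i
      = M k *ᵥ ∑ i ∈ range k, mprod M (i + 1) k *ᵥ d i + d k := by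
  rw [sum_range_succ, mprod_of_le M le_rfl, one_mulVec, mulVec_sum]
  congr 1
  refine sum_congr rfl fun i hi => ?_
  rw [mprod_succ M (mem_range.mp hi), mulVec_mulVec]

theorem Fblk_succ (A : ℕ → Matrix (Fin n) (Fin n) ℝ) (B : ℕ → Matrix (Fin n) (Fin m) ℝ)
    (α₁ : Matrix (Fin m) (Fin n) ℝ) (α₂ : Fin m → ℝ) (x : Fin n → ℝ) (k : ℕ) :
    Fblk A B α₁ α₂ x (k + 1) = Abar A B α₁ k *ᵥ Fblk A B α₁ α₂ x k + B k *ᵥ α₂ := by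
  simp only [Fblk, ← mulVec_mulVec]
  rw [sum_range_succ_mprod_mulVec, mprod_succ _ (Nat.zero_le k), ← mulVec_mulVec, mulVec_add,
    add_assoc]

theorem trajCL_eq_Fblk_add_sum (A : ℕ → Matrix (Fin n) (Fin n) ℝ)
    (B : ℕ → Matrix (Fin n) (Fin m) ℝ) (α₁ : Matrix (Fin m) (Fin n) ℝ) (α₂ : Fin m → ℝ)
    (d : ℕ → Fin n → ℝ) (x : Fin n → ℝ) (k : ℕ) :
    trajCL A B α₁ α₂ d x k
      = Fblk A B α₁ α₂ x k + ∑ i ∈ range k, mprod (Abar A B α₁) (i + 1) k *ᵥ d i := by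
  induction k with
  | zero => simp [trajCL, Fblk, mprod_of_le]
  | succ k ih =>
    have hstep : trajCL A B α₁ α₂ d x (k + 1)
        = Abar A B α₁ k *ᵥ trajCL A B α₁ α₂ d x k + B k *ᵥ α₂ + d k := by
      simp only [trajCL, Abar, add_mulVec, mulVec_add, mulVec_mulVec]
      abel
    rw [hstep, ih, Fblk_succ, sum_range_succ_mprod_mulVec, mulVec_add]
    abel

theorem trajCL_congr (A : ℕ → Matrix (Fin n) (Fin n) ℝ) (B : ℕ → Matrix (Fin n) (Fin m) ℝ)
    (α₁ : Matrix (Fin m) (Fin n) ℝ) (α₂ : Fin m → ℝ) {d d' : ℕ → Fin n → ℝ} (x : Fin n → ℝ)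
    {k : ℕ} (h : ∀ i < k, d i = d' i) :
    trajCL A B α₁ α₂ d x k = trajCL A B α₁ α₂ d' x k := by
  rw [trajCL_eq_Fblk_add_sum, trajCL_eq_Fblk_add_sum]
  congr 1
  exact sum_congr rfl fun i hi => by rw [h i (mem_range.mp hi)]

end ClosedLoop

section Stacking

variable {n N : ℕ}

-- The disturbance `d i` occupies block `i + 1` of a stacked vector; block `0`, where every
-- `E_k` vanishes, carries nothing.
def unstack (v : Fin (N + 1) × Fin n → ℝ) (i : ℕ) : Fin n → ℝ :=
  fun c => if h : i < N then v (Fin.succ ⟨i, h⟩, c) else 0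

def stack (d : ℕ → Fin n → ℝ) : Fin (N + 1) × Fin n → ℝ :=
  fun p => (Fin.cons (0 : Fin n → ℝ) (fun i : Fin N => d i) : Fin (N + 1) → Fin n → ℝ) p.1 p.2

theorem unstack_stack (d : ℕ → Fin n → ℝ) {i : ℕ} (hi : i < N) :
    unstack (stack (N := N) d) i = d i := by
  ext c
  simp only [unstack, stack, dif_pos hi, Fin.cons_succ]

theorem norm_unstack_le {v : Fin (N + 1) × Fin n → ℝ} {μ : ℝ} (hμ : 0 ≤ μ)
    (hv : ∀ p, |v p| ≤ μ) (i : ℕ) : ‖unstack v i‖ ≤ μ := by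
  refine (pi_norm_le_iff_of_nonneg hμ).mpr fun c => ?_
  rw [Real.norm_eq_abs, unstack]
  split_ifs
  exacts [hv _, abs_zero.trans_le hμ]

theorem abs_stack_le {d : ℕ → Fin n → ℝ} {μ : ℝ} (hμ : 0 ≤ μ) (hd : ∀ i, i < N → ‖d i‖ ≤ μ)
    (p : Fin (N + 1) × Fin n) : |stack d p| ≤ μ := by
  obtain ⟨j, c⟩ := p
  induction j using Fin.cases with
  | zero => simpa [stack] using hμ
  | succ i => exact (norm_le_pi_norm (d i) c).trans (hd i i.isLt)

theorem Eblk_mulVec (M : ℕ → Matrix (Fin n) (Fin n) ℝ) {k : ℕ} (hk : k ≤ N)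
    (v : Fin (N + 1) × Fin n → ℝ) :
    Eblk N M k *ᵥ v = ∑ i ∈ range k, mprod M (i + 1) k *ᵥ unstack v i := by
  ext r
  simp only [mulVec, dotProduct, Fintype.sum_prod_type, Fin.sum_univ_succ, Eblk, of_apply]
  rw [Finset.sum_apply, ← inter_eq_right.mpr (range_subset_range.mpr hk), ← sum_ite_mem,
    ← Fin.sum_univ_eq_sum_range]
  simp only [Fin.val_zero, Fin.val_succ, le_add_iff_nonneg_left, zero_le, true_and,
    Nat.add_one_le_iff, mem_range, lt_self_iff_false, and_true, ↓reduceIte, zero_mul,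
    sum_const_zero, ite_mul, sum_ite_irrel, zero_add]
  refine Fintype.sum_congr _ _ fun i => ?_
  split_ifs with hi
  · simp [mulVec, dotProduct, unstack]
  · simp

end Stacking

def ClosedLoopMeetsSpec {n m q : ℕ} (A : ℕ → Matrix (Fin n) (Fin n) ℝ)
    (B : ℕ → Matrix (Fin n) (Fin m) ℝ) (G : ℕ → Matrix (Fin q) (Fin n) ℝ) (H : ℕ → Fin q → ℝ)
    (α₁ : Matrix (Fin m) (Fin n) ℝ) (α₂ : Fin m → ℝ) (x : Fin n → ℝ) (N : ℕ) (ε : ℝ)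
    (d : ℕ → Fin n → ℝ) : Prop :=
  (∀ k, k ≤ N → G k *ᵥ trajCL A B α₁ α₂ d x k ≤ H k) ∧
  (∀ k, k < N → ‖α₁ *ᵥ trajCL A B α₁ α₂ d x k + α₂‖ ≤ ε)

section Certificate

variable {n m q N : ℕ} (A : ℕ → Matrix (Fin n) (Fin n) ℝ) (B : ℕ → Matrix (Fin n) (Fin m) ℝ)
  (G : ℕ → Matrix (Fin q) (Fin n) ℝ) (H : ℕ → Fin q → ℝ) (α₁ : Matrix (Fin m) (Fin n) ℝ)
  (α₂ : Fin m → ℝ) (x : Fin n → ℝ) {ε : ℝ}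

theorem closedLoopMeetsSpec_congr {d d' : ℕ → Fin n → ℝ} (h : ∀ i < N, d i = d' i) :
    ClosedLoopMeetsSpec A B G H α₁ α₂ x N ε d ↔ ClosedLoopMeetsSpec A B G H α₁ α₂ x N ε d' := by
  have htraj : ∀ k ≤ N, trajCL A B α₁ α₂ d x k = trajCL A B α₁ α₂ d' x k := fun k hk =>
    trajCL_congr A B α₁ α₂ x fun i hi => h i (by omega)
  unfold ClosedLoopMeetsSpec
  exact and_congr (forall₂_congr fun k hk => by rw [htraj k hk])
    (forall₂_congr fun k hk => by rw [htraj k hk.le])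

theorem trajCL_unstack (v : Fin (N + 1) × Fin n → ℝ) {k : ℕ} (hk : k ≤ N) :
    trajCL A B α₁ α₂ (unstack v) x k = Fblk A B α₁ α₂ x k + Eblk N (Abar A B α₁) k *ᵥ v := by
  rw [trajCL_eq_Fblk_add_sum, Eblk_mulVec _ hk]

theorem Ecl_mulVec_inl (v : Fin (N + 1) × Fin n → ℝ) (k : Fin (N + 1)) (r : Fin q) :
    (Ecl N A B G α₁ *ᵥ v) (Sum.inl (k, r)) = (G k *ᵥ (Eblk N (Abar A B α₁) k *ᵥ v)) r := by
  rw [Ecl, fromRows_mulVec, mulVec_mulVec]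
  rfl

theorem Ecl_mulVec_inr (v : Fin (N + 1) × Fin n → ℝ) (k : Fin N) (s : Fin m ⊕ Fin m) :
    (Ecl N A B G α₁ *ᵥ v) (Sum.inr (k, s))
      = (Au m *ᵥ (α₁ *ᵥ (Eblk N (Abar A B α₁) k *ᵥ v))) s := by
  rw [Ecl, fromRows_mulVec, mulVec_mulVec, mulVec_mulVec]
  rfl

theorem forall_Au_mulVec_le_iff (hε : 0 ≤ ε) (w : Fin m → ℝ) :
    (∀ s, (Au m *ᵥ w) s ≤ ε) ↔ ‖w‖ ≤ ε := by
  simp only [pi_norm_le_iff_of_nonneg hε, Real.norm_eq_abs, abs_le, Sum.forall, Au,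
    fromRows_mulVec, one_mulVec, neg_mulVec, Sum.elim_inl, Sum.elim_inr, Pi.neg_apply,
    ← forall_and]
  exact forall_congr' fun t => and_comm.trans (and_congr_left' neg_le)

theorem Ecl_mulVec_le_Fcl_iff (hε : 0 ≤ ε) (v : Fin (N + 1) × Fin n → ℝ) :
    Ecl N A B G α₁ *ᵥ v ≤ Fcl N A B G H α₁ α₂ x ε ↔
      ClosedLoopMeetsSpec A B G H α₁ α₂ x N ε (unstack v) := by
  have hstate : ∀ (k : Fin (N + 1)) r, (Ecl N A B G α₁ *ᵥ v) (Sum.inl (k, r))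
      ≤ Fcl N A B G H α₁ α₂ x ε (Sum.inl (k, r))
      ↔ (G k *ᵥ trajCL A B α₁ α₂ (unstack v) x k) r ≤ H k r := fun k r => by
    rw [Ecl_mulVec_inl, trajCL_unstack _ _ _ _ _ _ (Nat.lt_succ_iff.mp k.isLt), mulVec_add,
      Pi.add_apply]
    show _ ≤ H k r - (G k *ᵥ Fblk A B α₁ α₂ x k) r ↔ _
    rw [le_sub_iff_add_le']
  have hinput : ∀ k : Fin N, (∀ s, (Ecl N A B G α₁ *ᵥ v) (Sum.inr (k, s))
      ≤ Fcl N A B G H α₁ α₂ x ε (Sum.inr (k, s)))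
      ↔ ‖α₁ *ᵥ trajCL A B α₁ α₂ (unstack v) x k + α₂‖ ≤ ε := fun k => by
    rw [← forall_Au_mulVec_le_iff hε]
    refine forall_congr' fun s => ?_
    have hsplit : α₁ *ᵥ trajCL A B α₁ α₂ (unstack v) x k + α₂
        = α₁ *ᵥ (Eblk N (Abar A B α₁) k *ᵥ v) + Sk A B α₁ α₂ x k := by
      rw [trajCL_unstack _ _ _ _ _ _ k.isLt.le, Sk, mulVec_add]
      abel
    rw [Ecl_mulVec_inr, hsplit, mulVec_add, Pi.add_apply]
    show _ ≤ ε - (Au m *ᵥ Sk A B α₁ α₂ x k) s ↔ _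
    rw [le_sub_iff_add_le]
  rw [Pi.le_def, Sum.forall, Prod.forall, Prod.forall]
  simp only [hstate, hinput, ClosedLoopMeetsSpec, Pi.le_def, Fin.forall_iff, Nat.lt_succ_iff]

end Certificate

section Resilience

variable {n m q N : ℕ} (A : ℕ → Matrix (Fin n) (Fin n) ℝ) (B : ℕ → Matrix (Fin n) (Fin m) ℝ)
  (G : ℕ → Matrix (Fin q) (Fin n) ℝ) (H : ℕ → Fin q → ℝ) (α₁ : Matrix (Fin m) (Fin n) ℝ)
  (α₂ : Fin m → ℝ) (x : Fin n → ℝ) {ε μ : ℝ}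

theorem forall_closedLoopMeetsSpec_iff_forall_box (hε : 0 ≤ ε) (hμ : 0 ≤ μ) :
    (∀ d : ℕ → Fin n → ℝ, (∀ i, i < N → ‖d i‖ ≤ μ) →
        ClosedLoopMeetsSpec A B G H α₁ α₂ x N ε d) ↔
      ∀ v : Fin (N + 1) × Fin n → ℝ, (∀ p, |v p| ≤ μ) →
        Ecl N A B G α₁ *ᵥ v ≤ Fcl N A B G H α₁ α₂ x ε := by
  simp only [Ecl_mulVec_le_Fcl_iff A B G H α₁ α₂ x hε]
  refine ⟨fun h v hv => h _ fun i _ => norm_unstack_le hμ hv i, fun h d hd => ?_⟩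
  exact (closedLoopMeetsSpec_congr A B G H α₁ α₂ x fun i hi => unstack_stack d hi).mp
    (h _ (abs_stack_le hμ hd))

theorem forall_closedLoopMeetsSpec_iff_exists_certificate (hε : 0 ≤ ε) (hμ : 0 ≤ μ) :
    (∀ d : ℕ → Fin n → ℝ, (∀ i, i < N → ‖d i‖ ≤ μ) →
        ClosedLoopMeetsSpec A B G H α₁ α₂ x N ε d) ↔
      ∃ P : Matrix ((Fin (N + 1) × Fin q) ⊕ (Fin N × (Fin m ⊕ Fin m)))
          ((Fin (N + 1) × Fin n) ⊕ (Fin (N + 1) × Fin n)) ℝ,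
        (∀ i j, 0 ≤ P i j) ∧ P * AbM N n = μ • Ecl N A B G α₁ ∧
          P *ᵥ BbV N n ≤ Fcl N A B G H α₁ α₂ x ε := by
  rw [forall_closedLoopMeetsSpec_iff_forall_box A B G H α₁ α₂ x hε hμ,
    forall_abs_le_mulVec_le_iff _ _ hμ]
  exact (exists_nonneg_mul_fromRows_iff (μ • Ecl N A B G α₁) _).symm

end Resilience

/-- Resilience metric under the linear closed-loop controller, with input bound `ε₀`:
the supremum of admissible disturbance bounds `μ` in the robust formulation equals the
supremum in the Farkas-certified formulation. -/
theorem resilience_closedLoop {n m q N : ℕ}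
    (A : ℕ → Matrix (Fin n) (Fin n) ℝ) (B : ℕ → Matrix (Fin n) (Fin m) ℝ)
    (G : ℕ → Matrix (Fin q) (Fin n) ℝ) (H : ℕ → Fin q → ℝ)
    (x : Fin n → ℝ) (ε₀ : ℝ) (hε₀ : 0 ≤ ε₀) :
    sSup {μ : ℝ | 0 ≤ μ ∧ ∃ (α₁ : Matrix (Fin m) (Fin n) ℝ) (α₂ : Fin m → ℝ),
        ∀ d : ℕ → Fin n → ℝ, (∀ i, i < N → ‖d i‖ ≤ μ) →
          (∀ k, k ≤ N → (G k).mulVec (trajCL A B α₁ α₂ d x k) ≤ H k) ∧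
          (∀ k, k < N → ‖α₁.mulVec (trajCL A B α₁ α₂ d x k) + α₂‖ ≤ ε₀)} =
    sSup {μ : ℝ | 0 ≤ μ ∧ ∃ (α₁ : Matrix (Fin m) (Fin n) ℝ) (α₂ : Fin m → ℝ)
        (P : Matrix ((Fin (N + 1) × Fin q) ⊕ (Fin N × (Fin m ⊕ Fin m)))
          ((Fin (N + 1) × Fin n) ⊕ (Fin (N + 1) × Fin n)) ℝ),
        (∀ i j, 0 ≤ P i j) ∧
        P * AbM N n = μ • Ecl N A B G α₁ ∧
        P.mulVec (BbV N n) ≤ Fcl N A B G H α₁ α₂ x ε₀} := by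
  congr 1
  ext μ
  exact and_congr_right fun hμ => exists₂_congr fun α₁ α₂ =>
    forall_closedLoopMeetsSpec_iff_exists_certificate A B G H α₁ α₂ x hε₀ hμ
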